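/- Let p₀, p₁, p₂, p₃ be four points in ℝ³ whose pairwise distances all equal s > 0. Then the volume (Lebesgue measure) of their convex hull equals √2·s³/12. -/

import Mathlib

/-!
The edge vectors `vᵢ = pᵢ₊₁ - p₀` of a simplex in `ℝⁿ` are the images of the standard basis
under a linear map `f`, so the simplex is a translate of the image under `f` of the corner simplex
`{x ≥ 0, ∑ xᵢ ≤ 1}`, whose volume is `1 / n!` (slice off one coordinate and induct on `n`).
Hence the volume is `|det f| / n! = √(det G) / n!`, where `G = (⟪vᵢ, vⱼ⟫)` is the Gram matrix.
For a regular tetrahedron of edge `s`, polarization gives `G = s²/2 • (1 + J)` with `J` the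
all-ones matrix, so `det G = s⁶ / 2` and the volume is `√2 s³ / 12`.
-/

open MeasureTheory Set Pointwise Nat

theorem integral_sub_pow_div_factorial (n : ℕ) (c : ℝ) :
    ∫ t in (0 : ℝ)..c, (c - t) ^ n / n ! = c ^ (n + 1) / (n + 1)! := by
  rw [intervalIntegral.integral_div, intervalIntegral.integral_comp_sub_left (· ^ n), integral_pow,
    Nat.factorial_succ]
  push_cast
  field_simp
  ring

theorem volume_setOf_nonneg_sum_le (n : ℕ) {c : ℝ} (hc : 0 ≤ c) :
    volume {x : Fin n → ℝ | (∀ i, 0 ≤ x i) ∧ ∑ i, x i ≤ c} = ENNReal.ofReal (c ^ n / n !) := by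
  induction n generalizing c with
  | zero => simp [hc, volume_pi]
  | succ n ih =>
    set T : Set (ℝ × (Fin n → ℝ)) := {q | 0 ≤ q.1 ∧ (∀ i, 0 ≤ q.2 i) ∧ q.1 + ∑ i, q.2 i ≤ c}
    have hT : MeasurableSet T := by measurability
    have hpre : {x : Fin (n + 1) → ℝ | (∀ i, 0 ≤ x i) ∧ ∑ i, x i ≤ c} =
        MeasurableEquiv.piFinSuccAbove (fun _ => ℝ) 0 ⁻¹' T := by
      ext x
      simp [T, Fin.forall_fin_succ, Fin.sum_univ_succ, Fin.tail, and_assoc]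
    have hslice : ∀ t, volume (Prod.mk t ⁻¹' T) =
        (Icc 0 c).indicator (fun t => ENNReal.ofReal ((c - t) ^ n / n !)) t := by
      intro t
      by_cases ht : t ∈ Icc 0 c
      · rw [indicator_of_mem ht, ← ih (sub_nonneg.2 ht.2)]
        congr 1
        ext y
        simp [T, ht.1, le_sub_iff_add_le']
      · rw [indicator_of_notMem ht, ← measure_empty (μ := (volume : Measure (Fin n → ℝ)))]
        congr 1
        refine eq_empty_of_forall_notMem fun y ⟨ht0, hy0, hsum⟩ => ht ⟨ht0, ?_⟩
        linarith [Finset.sum_nonneg fun i (_ : i ∈ Finset.univ) => hy0 i]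
    rw [hpre,
      (volume_preserving_piFinSuccAbove (fun _ => ℝ) 0).measure_preimage hT.nullMeasurableSet,
      Measure.volume_eq_prod, Measure.prod_apply hT]
    simp only [hslice]
    rw [lintegral_indicator measurableSet_Icc, ← ofReal_integral_eq_lintegral_ofReal,
      integral_Icc_eq_integral_Ioc, ← intervalIntegral.integral_of_le hc,
      integral_sub_pow_div_factorial]
    · exact (by fun_prop : Continuous fun t : ℝ => (c - t) ^ n / n !).integrableOn_Icc
    · filter_upwards [ae_restrict_mem measurableSet_Icc] with t ht
      exact div_nonneg (pow_nonneg (sub_nonneg.2 ht.2) n) (by positivity)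

def cornerSimplex (ι : Type*) [Fintype ι] : Set (EuclideanSpace ℝ ι) :=
  {x | (∀ i, 0 ≤ x i) ∧ ∑ i, x i ≤ 1}

theorem convex_cornerSimplex (ι : Type*) [Fintype ι] : Convex ℝ (cornerSimplex ι) := by
  rintro x ⟨hx0, hx1⟩ y ⟨hy0, hy1⟩ a b ha hb hab
  refine ⟨fun i => ?_, ?_⟩
  · simpa using add_nonneg (mul_nonneg ha (hx0 i)) (mul_nonneg hb (hy0 i))
  · simp only [PiLp.add_apply, PiLp.smul_apply, smul_eq_mul, Finset.sum_add_distrib,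
      ← Finset.mul_sum]
    nlinarith

theorem convexHull_insert_zero_basisFun (ι : Type*) [Fintype ι] :
    convexHull ℝ (insert 0 (range (EuclideanSpace.basisFun ι ℝ))) = cornerSimplex ι := by
  apply (convexHull_min _ (convex_cornerSimplex ι)).antisymm
  · rintro x ⟨hx0, hx1⟩
    have hmem := (convex_convexHull ℝ (insert 0 (range (EuclideanSpace.basisFun ι ℝ)))).sum_mem
      (t := Finset.univ) (w := fun o : Option ι => o.elim (1 - ∑ i, x i) x)
      (z := fun o : Option ι => o.elim 0 (EuclideanSpace.basisFun ι ℝ))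
      (by rintro (_ | i) -; exacts [sub_nonneg.2 hx1, hx0 i]) (by simp [Fintype.sum_option])
      (by rintro (_ | i) - <;> apply subset_convexHull <;> simp)
    convert hmem
    simpa [Fintype.sum_option] using ((EuclideanSpace.basisFun ι ℝ).sum_repr x).symm
  · rintro _ (rfl | ⟨i, rfl⟩)
    · simp [cornerSimplex]
    · classical
      refine ⟨fun j => ?_, by simp [EuclideanSpace.basisFun_apply, PiLp.single_apply]⟩
      simp only [EuclideanSpace.basisFun_apply, PiLp.single_apply]
      positivity

theorem volume_cornerSimplex (n : ℕ) :
    volume (cornerSimplex (Fin n)) = ENNReal.ofReal (1 / n !) := by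
  have hmeas : MeasurableSet {x : Fin n → ℝ | (∀ i, 0 ≤ x i) ∧ ∑ i, x i ≤ 1} := by measurability
  rw [← one_pow n, ← volume_setOf_nonneg_sum_le n zero_le_one,
    ← (EuclideanSpace.volume_preserving_symm_measurableEquiv_toLp (Fin n)).measure_preimage
      hmeas.nullMeasurableSet]
  rfl

theorem volume_convexHull_range_eq_sqrt_det_gram {n : ℕ}
    (p : Fin (n + 1) → EuclideanSpace ℝ (Fin n)) :
    volume (convexHull ℝ (range p)) =
      ENNReal.ofReal (√(Matrix.gram ℝ fun i : Fin n => p i.succ - p 0).det / n !) := by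
  set b := EuclideanSpace.basisFun (Fin n) ℝ
  set f := b.toBasis.constr ℝ fun i : Fin n => p i.succ - p 0
  have hfb : ∀ i, f (b i) = p i.succ - p 0 := by
    intro i
    rw [← b.coe_toBasis, Module.Basis.constr_basis]
  have hhull : convexHull ℝ (range p) = p 0 +ᵥ f '' cornerSimplex (Fin n) := by
    have hp : p = (p 0 +ᵥ ·) ∘ f ∘ Fin.cons 0 b := by
      ext1 i
      refine Fin.cases ?_ (fun i => ?_) i <;> simp [hfb]
    nth_rw 1 [hp]
    rw [range_comp, range_comp, Fin.range_cons, image_vadd, convexHull_vadd,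
      ← f.image_convexHull, convexHull_insert_zero_basisFun]
  have hdet : |LinearMap.det f| = √(Matrix.gram ℝ fun i : Fin n => p i.succ - p 0).det := by
    rw [← f.normDet_eq_abs_det, ← Real.sqrt_sq f.normDet_nonneg]
    congr 1
    simpa [hfb] using f.normDet_sq_eq_det_gram b
  rw [hhull, measure_vadd, Measure.addHaar_image_linearMap,
    volume_cornerSimplex, hdet, ← ENNReal.ofReal_mul (by positivity), mul_one_div]

theorem gram_sub_eq_of_dist_eq {E : Type*} [NormedAddCommGroup E] [InnerProductSpace ℝ E] {n : ℕ}
    {s : ℝ} {p : Fin (n + 1) → E} (hdist : ∀ i j, i ≠ j → dist (p i) (p j) = s) :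
    Matrix.gram ℝ (fun i : Fin n => p i.succ - p 0) =
      Matrix.of fun i j => if i = j then s ^ 2 else s ^ 2 / 2 := by
  have hnorm : ∀ i : Fin n, ‖p i.succ - p 0‖ = s := fun i => by
    rw [← dist_eq_norm, hdist _ _ i.succ_ne_zero]
  ext i j
  rw [Matrix.gram_apply, Matrix.of_apply]
  split_ifs with hij
  · rw [hij, real_inner_self_eq_norm_sq, hnorm]
  · have hsub : ‖(p i.succ - p 0) - (p j.succ - p 0)‖ = s := by
      rw [sub_sub_sub_cancel_right, ← dist_eq_norm, hdist _ _ (Fin.succ_injective _ |>.ne hij)]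
    have := norm_sub_sq_real (p i.succ - p 0) (p j.succ - p 0)
    rw [hsub, hnorm, hnorm] at this
    linarith

theorem volume_regular_tetrahedron
    (s : ℝ) (hs : 0 < s) (p : Fin 4 → EuclideanSpace ℝ (Fin 3))
    (hdist : ∀ i j, i ≠ j → dist (p i) (p j) = s) :
    volume (convexHull ℝ (Set.range p)) = ENNReal.ofReal (Real.sqrt 2 * s ^ 3 / 12) := by
  have hdet : (Matrix.gram ℝ fun i : Fin 3 => p i.succ - p 0).det = s ^ 6 / 2 := by
    rw [gram_sub_eq_of_dist_eq hdist, Matrix.det_fin_three]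
    simp only [Matrix.of_apply, ↓reduceIte, Fin.reduceEq, zero_ne_one, one_ne_zero]
    ring
  have hsqrt : √(s ^ 6 / 2) = √2 * s ^ 3 / 2 := by
    rw [Real.sqrt_eq_iff_eq_sq (by positivity) (by positivity), mul_div_assoc, mul_pow,
      Real.sq_sqrt zero_le_two]
    ring
  rw [volume_convexHull_range_eq_sqrt_det_gram p, hdet, hsqrt]
  congr 1
  rw [show ((3 ! : ℕ) : ℝ) = 6 by norm_num [Nat.factorial]]
  ring
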